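/- Let m be odd, m ≥ 5, m = 2k+1, with m not divisible by 3. Then the 2m arcs (x_{k+i}, y_{k+2i}) and (y_{2k+2i}, x_i), i ∈ Z_m (subscripts mod m), form a single directed cycle of length 2m on the vertex set {x_0,...,x_{m-1}} ∪ {y_0,...,y_{m-1}}. -/

import Mathlib

/-- The `2m` leftover arcs of mixed differences of the Construction:
`(x_{k+i}, y_{k+2i})` and `(y_{2k+2i}, x_i)` for `i ∈ Z_m`, where `x`-vertices
are `Sum.inl` and `y`-vertices are `Sum.inr`. -/
def leftoverArcs (m k : ℕ) : Set ((ZMod m ⊕ ZMod m) × (ZMod m ⊕ ZMod m)) :=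
  {p | ∃ i : ZMod m,
    p = (Sum.inl ((k : ZMod m) + i), Sum.inr ((k : ZMod m) + 2 * i)) ∨
    p = (Sum.inr (2 * (k : ZMod m) + 2 * i), Sum.inl i)}

/-!
Since `2k + 1 = 0` in `ZMod m`, `k = -1/2`, so the arcs are `x_a → y_{2a+1/2}` and
`y_b → x_{b/2+1/2}`: the walk alternates sides, and every two steps translate the `x`-index by
`3/4`, a unit because `2, 3 ∤ m`. So it visits all `m` vertices `x_a` before closing up, and with
them all `m` vertices `y_b`.
-/

/-- Vertex `t ↔ (t mod 2, t mod m) = (ε, s)` of the cycle: `x_{3s/8}` for even `t`,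
`y_{3(s-1)/4+1/2}` for odd `t`; here `1/8 = -k³`, `1/4 = k²` and `1/2 = -k`. -/
def leftoverCycle {m : ℕ} (k : ZMod m) : ZMod 2 × ZMod m → ZMod m ⊕ ZMod m
  | (ε, s) => if ε = 0 then Sum.inl (-3 * k ^ 3 * s) else Sum.inr (3 * k ^ 2 * (s - 1) - k)

section leftoverCycle

variable {m : ℕ} {k : ZMod m}

@[simp]
theorem leftoverCycle_zero (s : ZMod m) : leftoverCycle k (0, s) = Sum.inl (-3 * k ^ 3 * s) :=
  rfl

@[simp]
theorem leftoverCycle_one (s : ZMod m) :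
    leftoverCycle k (1, s) = Sum.inr (3 * k ^ 2 * (s - 1) - k) :=
  rfl

theorem zmod_two_eq_zero_or_eq_one (ε : ZMod 2) : ε = 0 ∨ ε = 1 := by
  revert ε; decide

theorem leftoverCycle_injective (hk : IsUnit k) (h3 : IsUnit (3 : ZMod m)) :
    Function.Injective (leftoverCycle k) := by
  rintro ⟨ε, s⟩ ⟨ε', s'⟩ h
  obtain rfl | rfl := zmod_two_eq_zero_or_eq_one ε <;>
    obtain rfl | rfl := zmod_two_eq_zero_or_eq_one ε' <;>
    simp only [leftoverCycle_zero, leftoverCycle_one, Sum.inl.injEq, Sum.inr.injEq, reduceCtorEq,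
      Prod.mk.injEq, true_and] at h ⊢
  · exact (h3.neg.mul (hk.pow 3)).mul_left_cancel h
  · exact sub_left_injective ((h3.mul (hk.pow 2)).mul_left_cancel (sub_left_injective h))

theorem leftoverCycle_bijective [NeZero m] (hk : IsUnit k) (h3 : IsUnit (3 : ZMod m)) :
    Function.Bijective (leftoverCycle k) := by
  refine (Fintype.bijective_iff_injective_and_card _).mpr ⟨leftoverCycle_injective hk h3, ?_⟩
  simp only [Fintype.card_prod, Fintype.card_sum, ZMod.card]
  ring

end leftoverCycle

theorem leftoverCycle_mem_leftoverArcs {m k : ℕ} (hk : 2 * (k : ZMod m) + 1 = 0)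
    (v : ZMod 2 × ZMod m) :
    (leftoverCycle (k : ZMod m) v, leftoverCycle (k : ZMod m) (v + 1)) ∈ leftoverArcs m k := by
  obtain ⟨ε, s⟩ := v
  obtain rfl | rfl := zmod_two_eq_zero_or_eq_one ε
  · refine ⟨-3 * k ^ 3 * s - k, Or.inl ?_⟩
    rw [← Prod.mk_one_one, Prod.mk_add_mk, zero_add, leftoverCycle_zero, leftoverCycle_one]
    congr 2
    · ring
    · linear_combination 3 * k ^ 2 * s * hk
  · refine ⟨-3 * k ^ 3 * (s + 1), Or.inr ?_⟩
    have h_one_add_one : (1 : ZMod 2) + 1 = 0 := rfl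
    rw [← Prod.mk_one_one, Prod.mk_add_mk, h_one_add_one, leftoverCycle_zero, leftoverCycle_one]
    congr 2
    linear_combination (3 * k ^ 2 * s + 3 * k ^ 2 - 3 * k) * hk

theorem leftover_is_single_cycle_general (m k : ℕ) (hm : m = 2 * k + 1)
    (h3 : ¬ 3 ∣ m) :
    ∃ c : ZMod (2 * m) → ZMod m ⊕ ZMod m, Function.Bijective c ∧
      ∀ t : ZMod (2 * m), (c t, c (t + 1)) ∈ leftoverArcs m k := by
  have : NeZero m := ⟨by omega⟩
  have hk : 2 * (k : ZMod m) + 1 = 0 := by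
    exact_mod_cast (ZMod.natCast_eq_zero_iff _ m).mpr (by simp [hm])
  have hk_unit : IsUnit (k : ZMod m) := .of_mul_eq_one (-2) (by linear_combination -hk)
  have h3_unit : IsUnit (3 : ZMod m) := by
    exact_mod_cast ZMod.isUnit_prime_of_not_dvd Nat.prime_three h3
  let crt := ZMod.chineseRemainder (Nat.coprime_two_left.mpr (hm ▸ odd_two_mul_add_one k))
  refine ⟨leftoverCycle (k : ZMod m) ∘ crt,
    (leftoverCycle_bijective hk_unit h3_unit).comp crt.bijective, fun t => ?_⟩
  simpa only [Function.comp_apply, map_add, map_one] using leftoverCycle_mem_leftoverArcs hk (crt t)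

/-- For odd `m = 2k+1 ≥ 5` not divisible by 3, the `2m` leftover arcs form a
single directed cycle of length `2m` through all the vertices
`x_0, …, x_{m-1}, y_0, …, y_{m-1}`. -/
theorem leftover_is_single_cycle (m k : ℕ) (hm : m = 2 * k + 1) (h5 : 5 ≤ m)
    (h3 : ¬ 3 ∣ m) :
    ∃ c : ZMod (2 * m) → ZMod m ⊕ ZMod m, Function.Bijective c ∧
      ∀ t : ZMod (2 * m), (c t, c (t + 1)) ∈ leftoverArcs m k :=
  leftover_is_single_cycle_general m k hm h3
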